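/- (Exponential portfolio ratio bounded by 1) Assume μ is supported on (0,∞) with finite first moment. For t ∈ [0,T), y ∈ ℝ: 0 ≤ (∫ Θ̂(T,y+z) φ_{T−t}(z) dz) / Θ̂(t,y) ≤ 1, where Θ̂(t,y) = ∫Θ̂(T,y+z)·F(T,y+z)φ_{T−t}(z)dz/∫F(T,y+w)φ_{T−t}(w)dw. -/

import Mathlib

/-!
`F(T, ·)` and `Θ̂(T, ·)` are increasing: the first because `μ` lives on `(0, ∞)`, the second
because `Θ̂(T, u)` is the mean of `μ` tilted by `exp (θ u)`, and a tilt by `exp (θ d)`, `d ≥ 0`,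
raises the mean by Chebyshev's correlation inequality. Applying the same inequality to the two
increasing functions `Θ̂(T, y + ·)` and `F(T, y + ·)` against the Gaussian density shows that the
`F`-weighted Gaussian average `Θ̂(t, y)` dominates the plain Gaussian average of `Θ̂(T, y + ·)`.
-/

open MeasureTheory Real ProbabilityTheory

theorem integral_mul_integral_le_of_monovary {X : Type*} [MeasurableSpace X] {ν : Measure X}
    [SFinite ν] {f g w : X → ℝ} (hfg : Monovary f g) (hw : 0 ≤ w)
    (hfw : Integrable (fun x => f x * w x) ν) (hgw : Integrable (fun x => g x * w x) ν)
    (hfgw : Integrable (fun x => f x * g x * w x) ν) (hw' : Integrable w ν) :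
    (∫ x, f x * w x ∂ν) * (∫ x, g x * w x ∂ν) ≤ (∫ x, f x * g x * w x ∂ν) * ∫ x, w x ∂ν := by
  have i₁ := hfgw.mul_prod hw'
  have i₂ := hw'.mul_prod hfgw
  have i₃ := hfw.mul_prod hgw
  have i₄ := hgw.mul_prod hfw
  -- symmetrize `(f x - f y) * (g x - g y) ≥ 0` against the product weight `w x * w y`
  have hpair : 0 ≤ ∫ p : X × X, ((f p.1 * g p.1 * w p.1) * w p.2 + w p.1 * (f p.2 * g p.2 * w p.2)
      - ((f p.1 * w p.1) * (g p.2 * w p.2) + (g p.1 * w p.1) * (f p.2 * w p.2))) ∂ν.prod ν := by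
    refine integral_nonneg fun p => ?_
    have := mul_nonneg (hfg.sub_mul_sub_nonneg p.1 p.2) (mul_nonneg (hw p.1) (hw p.2))
    dsimp only [Pi.zero_apply]
    nlinarith
  rw [integral_sub, integral_add i₁ i₂, integral_add i₃ i₄,
    integral_prod_mul (fun x => f x * g x * w x) w, integral_prod_mul w (fun x => f x * g x * w x),
    integral_prod_mul (fun x => f x * w x) (fun x => g x * w x),
    integral_prod_mul (fun x => g x * w x) (fun x => f x * w x)] at hpair
  · linarith
  exacts [i₁.add i₂, i₃.add i₄]

theorem integral_le_integral_mul_div_of_monovary {X : Type*} [MeasurableSpace X]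
    {ν : Measure X} [SFinite ν] {f g w : X → ℝ} (hfg : Monovary f g) (hw : 0 ≤ w)
    (hw_one : ∫ x, w x ∂ν = 1) (hgw_pos : 0 < ∫ x, g x * w x ∂ν)
    (hfw : Integrable (fun x => f x * w x) ν) (hgw : Integrable (fun x => g x * w x) ν)
    (hfgw : Integrable (fun x => f x * (g x * w x)) ν) (hw' : Integrable w ν) :
    ∫ x, f x * w x ∂ν ≤ (∫ x, f x * (g x * w x) ∂ν) / ∫ x, g x * w x ∂ν := by
  have hcheb := integral_mul_integral_le_of_monovary hfg hw hfw hgw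
    (hfgw.congr (ae_of_all _ fun x => (mul_assoc _ _ _).symm)) hw'
  simp only [hw_one, mul_one, mul_assoc] at hcheb
  rwa [le_div_iff₀ hgw_pos]

theorem integral_pos_of_ae_pos {X : Type*} [MeasurableSpace X] {ν : Measure X} [NeZero ν]
    {f : X → ℝ} (hf : ∀ᵐ x ∂ν, 0 < f x) (hfi : Integrable f ν) : 0 < ∫ x, f x ∂ν := by
  rw [integral_pos_iff_support_of_nonneg_ae (hf.mono fun _ h => h.le) hfi, pos_iff_ne_zero]
  intro hzero
  obtain ⟨x, hx, hx₀⟩ := (hf.and (measure_eq_zero_iff_ae_notMem.mp hzero)).exists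
  exact hx₀ hx.ne'

theorem monotone_integral_exp_mul_sub (μ : Measure ℝ) (hμ : ∀ᵐ θ ∂μ, 0 ≤ θ) (s : ℝ)
    (hE : ∀ u, Integrable (fun θ => exp (θ * u - θ ^ 2 * s / 2)) μ) :
    Monotone fun u => ∫ θ, exp (θ * u - θ ^ 2 * s / 2) ∂μ := fun u v huv =>
  integral_mono_ae (hE u) (hE v) <| hμ.mono fun θ hθ => by
    dsimp only
    gcongr

theorem monotone_integral_mul_exp_div_integral_exp (μ : Measure ℝ) [SFinite μ] [NeZero μ] (s : ℝ)
    (hE : ∀ u, Integrable (fun θ => exp (θ * u - θ ^ 2 * s / 2)) μ)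
    (hM : ∀ u, Integrable (fun θ => θ * exp (θ * u - θ ^ 2 * s / 2)) μ) :
    Monotone fun u =>
      (∫ θ, θ * exp (θ * u - θ ^ 2 * s / 2) ∂μ) / ∫ θ, exp (θ * u - θ ^ 2 * s / 2) ∂μ := by
  intro u v huv
  have htilt : ∀ θ : ℝ, exp (θ * (v - u)) * exp (θ * u - θ ^ 2 * s / 2)
      = exp (θ * v - θ ^ 2 * s / 2) := fun θ => by rw [← exp_add]; ring_nf
  have hmono : Monotone fun θ : ℝ => exp (θ * (v - u)) := fun a b hab => by
    have : 0 ≤ v - u := sub_nonneg.mpr huv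
    dsimp only
    gcongr
  have key := integral_mul_integral_le_of_monovary (monotone_id.monovary hmono)
    (fun θ => (exp_pos (θ * u - θ ^ 2 * s / 2)).le) (hM u)
    ((hE v).congr (ae_of_all _ fun θ => (htilt θ).symm))
    ((hM v).congr (ae_of_all _ fun θ => by simp only [id, mul_assoc, htilt]))
    (hE u)
  simp only [id, mul_assoc, htilt] at key
  rw [div_le_div_iff₀ (integral_exp_pos (hE u)) (integral_exp_pos (hE v))]
  linarith

theorem stmt18_general (μ : Measure ℝ) [IsProbabilityMeasure μ]
    (hsupp : ∀ᵐ θ ∂μ, 0 < θ)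
    (T t y : ℝ) (htT : t < T)
    (F Θhat : ℝ → ℝ → ℝ)
    (hF : ∀ s u, F s u = ∫ θ, Real.exp (θ * u - θ ^ 2 * s / 2) ∂μ)
    (hΘ : ∀ s u, Θhat s u =
      (∫ θ, θ * Real.exp (θ * u - θ ^ 2 * s / 2) ∂μ) / F s u)
    (hFint : ∀ s u, Integrable (fun θ : ℝ => Real.exp (θ * u - θ ^ 2 * s / 2)) μ)
    (hNint : ∀ s u, Integrable (fun θ : ℝ => θ * Real.exp (θ * u - θ ^ 2 * s / 2)) μ)
    (φ : ℝ → ℝ)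
    (hφ : ∀ z, φ z = Real.exp (-z ^ 2 / (2 * (T - t))) / Real.sqrt (2 * π * (T - t)))
    (hint1 : Integrable (fun z => Θhat T (y + z) * φ z))
    (hint2 : Integrable (fun z => Θhat T (y + z) * (F T (y + z) * φ z)))
    (hint3 : Integrable (fun w => F T (y + w) * φ w))
    (hrep : Θhat t y = (∫ z, Θhat T (y + z) * (F T (y + z) * φ z)) /
      ∫ w, F T (y + w) * φ w) :
    0 ≤ (∫ z, Θhat T (y + z) * φ z) / Θhat t y ∧
    (∫ z, Θhat T (y + z) * φ z) / Θhat t y ≤ 1 := by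
  have hσ : 0 < T - t := sub_pos.mpr htT
  have hv : (T - t).toNNReal ≠ 0 := by simpa using hσ
  have hφ_pdf : φ = gaussianPDFReal 0 (T - t).toNNReal := funext fun z => by
    rw [hφ, gaussianPDFReal, Real.coe_toNNReal _ hσ.le, sub_zero, div_eq_inv_mul]
  have hφ_pos : ∀ z, 0 < φ z := hφ_pdf ▸ fun z => gaussianPDFReal_pos 0 _ z hv
  have hFT : F T = fun u => ∫ θ, exp (θ * u - θ ^ 2 * T / 2) ∂μ := funext (hF T)
  have hF_pos : ∀ u, 0 < F T u := fun u => hFT ▸ integral_exp_pos (hFint T u)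
  have hF_mono : Monotone (F T) := hFT ▸
    monotone_integral_exp_mul_sub μ (hsupp.mono fun _ h => h.le) T (hFint T)
  have hΘT : Θhat T = fun u => (∫ θ, θ * exp (θ * u - θ ^ 2 * T / 2) ∂μ) /
      ∫ θ, exp (θ * u - θ ^ 2 * T / 2) ∂μ := funext fun u => by rw [hΘ, hF]
  have hΘ_mono : Monotone (Θhat T) :=
    hΘT ▸ monotone_integral_mul_exp_div_integral_exp μ T (hFint T) (hNint T)
  have hΘ_pos : ∀ u, 0 < Θhat T u := fun u => hΘ T u ▸ div_pos
    (integral_pos_of_ae_pos (hsupp.mono fun θ hθ => mul_pos hθ (exp_pos _)) (hNint T u))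
    (hF_pos u)
  have hA : 0 < ∫ z, Θhat T (y + z) * φ z :=
    integral_pos_of_ae_pos (ae_of_all _ fun z => mul_pos (hΘ_pos _) (hφ_pos z)) hint1
  have hle : ∫ z, Θhat T (y + z) * φ z ≤ Θhat t y := hrep ▸
    integral_le_integral_mul_div_of_monovary
      ((hΘ_mono.comp (monotone_id.const_add y)).monovary (hF_mono.comp (monotone_id.const_add y)))
      (fun z => (hφ_pos z).le) (hφ_pdf ▸ integral_gaussianPDFReal_eq_one 0 hv)
      (integral_pos_of_ae_pos (ae_of_all _ fun w => mul_pos (hF_pos _) (hφ_pos w)) hint3)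
      hint1 hint3 hint2 (hφ_pdf ▸ integrable_gaussianPDFReal 0 _)
  exact ⟨div_nonneg hA.le (hA.trans_le hle).le, div_le_one_of_le₀ hle (hA.trans_le hle).le⟩

/-- the exponential-utility portfolio ratio is between 0 and 1:
`0 ≤ (∫ Θ̂(T,y+z) φ_{T-t}(z) dz) / Θ̂(t,y) ≤ 1`, where
`Θ̂(t,y) = ∫ Θ̂(T,y+z) F(T,y+z) φ_{T-t}(z) dz / ∫ F(T,y+w) φ_{T-t}(w) dw`
and μ is supported on `(0,∞)` with finite first moment. -/
theorem stmt18 (μ : Measure ℝ) [IsProbabilityMeasure μ]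
    (hsupp : ∀ᵐ θ ∂μ, 0 < θ)
    (hmom : Integrable (fun θ : ℝ => |θ|) μ)
    (T t y : ℝ) (ht : 0 ≤ t) (htT : t < T)
    (F Θhat : ℝ → ℝ → ℝ)
    (hF : ∀ s u, F s u = ∫ θ, Real.exp (θ * u - θ ^ 2 * s / 2) ∂μ)
    (hΘ : ∀ s u, Θhat s u =
      (∫ θ, θ * Real.exp (θ * u - θ ^ 2 * s / 2) ∂μ) / F s u)
    (hFint : ∀ s u, Integrable (fun θ : ℝ => Real.exp (θ * u - θ ^ 2 * s / 2)) μ)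
    (hNint : ∀ s u, Integrable (fun θ : ℝ => θ * Real.exp (θ * u - θ ^ 2 * s / 2)) μ)
    (φ : ℝ → ℝ)
    (hφ : ∀ z, φ z = Real.exp (-z ^ 2 / (2 * (T - t))) / Real.sqrt (2 * π * (T - t)))
    (hint1 : Integrable (fun z => Θhat T (y + z) * φ z))
    (hint2 : Integrable (fun z => Θhat T (y + z) * (F T (y + z) * φ z)))
    (hint3 : Integrable (fun w => F T (y + w) * φ w))
    (hrep : Θhat t y = (∫ z, Θhat T (y + z) * (F T (y + z) * φ z)) /
      ∫ w, F T (y + w) * φ w) :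
    0 ≤ (∫ z, Θhat T (y + z) * φ z) / Θhat t y ∧
    (∫ z, Θhat T (y + z) * φ z) / Θhat t y ≤ 1 :=
  stmt18_general μ hsupp T t y htT F Θhat hF hΘ hFint hNint φ hφ hint1 hint2 hint3 hrep
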